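/- Let i ∈ k satisfy i² = −1 and let b ∈ k with b ∉ {2, −2}. There exist u, λ ∈ k with u ≠ 0, λ ≠ 0 and ε ∈ {1, −1} such that λ²·f_b(X) = Σ_{j=0}^{9} cⱼ·(εi)ʲ·(X+u)ʲ·(X−u)^{10−j} in k[X] (where cⱼ is the coefficient of Xʲ in f_0, i.e. λ²·f_b(x) = (x−u)¹⁰·f_0(εi(x+u)/(x−u))), if and only if b = 6 or b = −6. -/
import Mathlib


open Polynomial

/-- The polynomial `f_a = X (X⁴ − 1)(X⁴ + a X² + 1)` over a field `k`. -/
noncomputable def f {k : Type*} [Field k] (a : k) : k[X] :=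
  X * (X ^ 4 - 1) * (X ^ 4 + C a * X ^ 2 + 1)

lemma f_eq {k : Type*} [Field k] (a : k) :
    f a = X ^ 9 + C a * X ^ 7 - C a * X ^ 3 - X := by
  unfold f; ring

lemma f_zero {k : Type*} [Field k] : f (0 : k) = X ^ 9 - X := by
  rw [f_eq]; simp

lemma sum_eq {k : Type*} [Field k] (u c : k) :
    (∑ j ∈ Finset.range 10,
        C ((f (0 : k)).coeff j * c ^ j) * (X + C u) ^ j * (X - C u) ^ (10 - j))
      = C (c ^ 9) * (X + C u) ^ 9 * (X - C u) - C c * (X + C u) * (X - C u) ^ 9 := by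
  rw [f_zero]
  simp [Finset.sum_range_succ, coeff_sub, coeff_X_pow, coeff_X]
  ring

lemma expand_eq {k : Type*} [Field k] (u c : k) (hc : c ^ 2 = -1) :
    C (c ^ 9) * (X + C u) ^ 9 * (X - C u) - C c * (X + C u) * (X - C u) ^ 9
      = C (16 * c * u) * X ^ 9 + C (96 * c * u ^ 3) * X ^ 7
        - C (96 * c * u ^ 7) * X ^ 3 - C (16 * c * u ^ 9) * X := by
  have h9 : c ^ 9 = c := by linear_combination (c ^ 7 - c ^ 5 + c ^ 3 - c) * hc
  rw [h9]
  simp only [C_mul, C_pow, map_ofNat]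
  ring

lemma eq_coeffs {k : Type*} [Field k] {a9 a7 a3 a1 b9 b7 b3 b1 : k}
    (h : C a9 * X ^ 9 + C a7 * X ^ 7 + C a3 * X ^ 3 + C a1 * X
        = C b9 * X ^ 9 + C b7 * X ^ 7 + C b3 * X ^ 3 + C b1 * X) :
    a9 = b9 ∧ a7 = b7 ∧ a3 = b3 ∧ a1 = b1 := by
  rw [Polynomial.ext_iff] at h
  refine ⟨?_, ?_, ?_, ?_⟩
  · simpa [coeff_add, coeff_C_mul, coeff_X_pow, coeff_X] using h 9
  · simpa [coeff_add, coeff_C_mul, coeff_X_pow, coeff_X] using h 7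
  · simpa [coeff_add, coeff_C_mul, coeff_X_pow, coeff_X] using h 3
  · simpa [coeff_add, coeff_C_mul, coeff_X_pow, coeff_X] using h 1

theorem stmt_8 (p : ℕ) (hp : p.Prime) (hp7 : 7 ≤ p)
    (k : Type*) [Field k] [IsAlgClosed k] [CharP k p]
    (i : k) (hi : i ^ 2 = -1)
    (b : k) (hb : b ∉ ({2, -2} : Set k)) :
    (∃ u lam ε : k, u ≠ 0 ∧ lam ≠ 0 ∧ ε ∈ ({1, -1} : Set k) ∧
      C (lam ^ 2) * f b =
        ∑ j ∈ Finset.range 10,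
          C ((f (0 : k)).coeff j * (ε * i) ^ j) * (X + C u) ^ j * (X - C u) ^ (10 - j)) ↔
    (b = 6 ∨ b = -6) := by
  have hcast : ∀ n : ℕ, 0 < n → n < p → (n : k) ≠ 0 := by
    intro n hn hnp h
    have hd := (CharP.cast_eq_zero_iff k p n).mp h
    have := Nat.le_of_dvd hn hd
    omega
  have h2 : (2 : k) ≠ 0 := by
    have := hcast 2 (by norm_num) (by omega); exact_mod_cast this
  have h6 : (6 : k) ≠ 0 := by
    have := hcast 6 (by norm_num) (by omega); exact_mod_cast this
  have h16 : (16 : k) ≠ 0 := by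
    have : (16 : k) = 2 ^ 4 := by norm_num
    rw [this]; exact pow_ne_zero _ h2
  have hi0 : i ≠ 0 := by
    intro h; rw [h] at hi
    exact one_ne_zero (by linear_combination hi)
  constructor
  · rintro ⟨u, lam, ε, hu, hlam, hε, h⟩
    set c := ε * i with hcdef
    have hε' : ε = 1 ∨ ε = -1 := by simpa using hε
    have hc : c ^ 2 = -1 := by
      rcases hε' with rfl | rfl <;>
        · rw [hcdef]; linear_combination hi
    have hc0 : c ≠ 0 := by
      intro h0; rw [h0] at hc
      exact one_ne_zero (by linear_combination hc)
    rw [sum_eq u c, expand_eq u c hc] at h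
    have h' : C (lam ^ 2) * X ^ 9 + C (lam ^ 2 * b) * X ^ 7 + C (-(lam ^ 2 * b)) * X ^ 3
        + C (-(lam ^ 2)) * X
        = C (16 * c * u) * X ^ 9 + C (96 * c * u ^ 3) * X ^ 7 + C (-(96 * c * u ^ 7)) * X ^ 3
          + C (-(16 * c * u ^ 9)) * X := by
      rw [f_eq] at h
      simp only [map_mul, map_neg, map_ofNat, map_pow] at h ⊢
      linear_combination h
    obtain ⟨e9, e7, e3, e1⟩ := eq_coeffs h'
    have e3' : lam ^ 2 * b = 96 * c * u ^ 7 := by linear_combination -e3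
    have e1' : lam ^ 2 = 16 * c * u ^ 9 := by linear_combination -e1
    have h16cu : (16 : k) * c * u ≠ 0 := mul_ne_zero (mul_ne_zero h16 hc0) hu
    have h16cu7 : (16 : k) * c * u ^ 7 ≠ 0 :=
      mul_ne_zero (mul_ne_zero h16 hc0) (pow_ne_zero _ hu)
    have hb2 : b = 6 * u ^ 2 := by
      apply mul_left_cancel₀ h16cu
      linear_combination e7 - b * e9
    have hbu : b * u ^ 2 = 6 := by
      apply mul_left_cancel₀ h16cu7
      linear_combination e3' - b * e1'
    have hu4 : u ^ 4 = 1 := by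
      apply mul_left_cancel₀ h6
      linear_combination hbu - u ^ 2 * hb2
    have := mul_eq_zero.mp (show (u ^ 2 - 1) * (u ^ 2 + 1) = (0 : k) by linear_combination hu4)
    rcases this with h1 | h1
    · left; linear_combination hb2 + 6 * h1
    · right; linear_combination hb2 + 6 * h1
  · rintro (rfl | rfl)
    · obtain ⟨lam, hlam⟩ := IsAlgClosed.exists_pow_nat_eq (16 * i) (n := 2) (by norm_num)
      have hlam0 : lam ≠ 0 := by
        intro h; rw [h] at hlam
        exact mul_ne_zero h16 hi0 (by linear_combination -hlam)
      refine ⟨1, lam, 1, one_ne_zero, hlam0, Or.inl rfl, ?_⟩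
      rw [sum_eq, expand_eq 1 (1 * i) (by linear_combination hi), hlam, f_eq]
      simp only [C_mul, C_pow, map_ofNat, map_one, one_pow, mul_one, one_mul]
      ring
    · refine ⟨i, 4 * i, 1, hi0, mul_ne_zero (by
        have := hcast 4 (by norm_num) (by omega); exact_mod_cast this) hi0,
        Or.inl rfl, ?_⟩
      rw [sum_eq, expand_eq i (1 * i) (by linear_combination hi), f_eq]
      have s0 : (4 * i) ^ 2 = -16 := by linear_combination 16 * hi
      have s1 : 16 * (1 * i) * i = -16 := by linear_combination 16 * hi
      have s2 : 96 * (1 * i) * i ^ 3 = 96 := by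
        linear_combination (96 * i ^ 2 - 96) * hi
      have s3 : 96 * (1 * i) * i ^ 7 = 96 := by
        linear_combination (96 * (i ^ 2 - 1) * (i ^ 4 + 1)) * hi
      have s4 : 16 * (1 * i) * i ^ 9 = -16 := by
        linear_combination 16 * (i ^ 8 - i ^ 6 + i ^ 4 - i ^ 2 + 1) * hi
      rw [s0, s1, s2, s3, s4]
      simp only [map_neg, map_ofNat]
      ring
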